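/- arXiv:2003.09522 — 10 statements merged into one kernel-verified Lean document; each statement's English description precedes it below -/
import Mathlib

section
/- Let L be the logic RmbC, or any extension of RmbC by further axiom schemas over the signature Σ in which derivation from premises is defined as in RmbC. Then L satisfies the replacement property: if α ↔ β is a theorem of L, then for every formula γ(p) the formula γ[p/α] ↔ γ[p/β] is a theorem of L (where γ[p/α] denotes the result of replacing every occurrence of the variable p in γ by α). -/
namespace LFI

/-- Formulas over the propositional signature Σ = {∧,∨,→,¬,∘}:
`neg` is the paraconsistent negation ¬ and `circ` the consistency operator ∘. -/
inductive Formula : Type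
  | var : ℕ → Formula
  | and : Formula → Formula → Formula
  | or : Formula → Formula → Formula
  | imp : Formula → Formula → Formula
  | neg : Formula → Formula
  | circ : Formula → Formula

namespace Formula

/-- `α ↔ β` abbreviates `(α→β) ∧ (β→α)`. -/
def iffF (a b : Formula) : Formula := and (imp a b) (imp b a)

/-- Conjunction `γ ∧ γ₁ ∧ … ∧ γₙ` of the nonempty list `γ :: l` (right-associated). -/
def conjL (γ : Formula) : List Formula → Formula
  | [] => γ
  | ψ :: l => and γ (conjL ψ l)

/-- `subst p α γ` is `γ[p/α]`: the result of replacing every occurrence of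
the propositional variable `p` in `γ` by `α`. -/
def subst (p : ℕ) (α : Formula) : Formula → Formula
  | var q => if q = p then α else var q
  | and a b => and (subst p α a) (subst p α b)
  | or a b => or (subst p α a) (subst p α b)
  | imp a b => imp (subst p α a) (subst p α b)
  | neg a => neg (subst p α a)
  | circ a => circ (subst p α a)

end Formula

open Formula

/-- Theoremhood for the Hilbert calculus `RmbC` (axioms Ax1–Ax10 of CPL⁺ plus (bc1),
modus ponens and the replacement rules (R¬), (R∘)) extended with an arbitrary set `Ax`
of extra axiom(-schema instance)s.  `Prf ∅` is theoremhood in RmbC itself. -/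
inductive Prf (Ax : Set Formula) : Formula → Prop
  | ax1 (a b : Formula) : Prf Ax (imp a (imp b a))
  | ax2 (a b c : Formula) :
      Prf Ax (imp (imp a (imp b c)) (imp (imp a b) (imp a c)))
  | ax3 (a b : Formula) : Prf Ax (imp a (imp b (and a b)))
  | ax4 (a b : Formula) : Prf Ax (imp (and a b) a)
  | ax5 (a b : Formula) : Prf Ax (imp (and a b) b)
  | ax6 (a b : Formula) : Prf Ax (imp a (or a b))
  | ax7 (a b : Formula) : Prf Ax (imp b (or a b))
  | ax8 (a b c : Formula) :
      Prf Ax (imp (imp a c) (imp (imp b c) (imp (or a b) c)))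
  | ax9 (a b : Formula) : Prf Ax (or (imp a b) a)
  | ax10 (a : Formula) : Prf Ax (or a (neg a))
  | bc1 (a b : Formula) : Prf Ax (imp (circ a) (imp a (imp (neg a) b)))
  | ext {a : Formula} : a ∈ Ax → Prf Ax a
  | mp {a b : Formula} : Prf Ax (imp a b) → Prf Ax a → Prf Ax b
  | rneg {a b : Formula} : Prf Ax (iffF a b) → Prf Ax (iffF (neg a) (neg b))
  | rcirc {a b : Formula} : Prf Ax (iffF a b) → Prf Ax (iffF (circ a) (circ b))

/-- Local derivation from premises: `Γ ⊢ φ` iff `φ` is a theorem, or there is a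
finite nonempty subset `{γ, γ₁, …, γₙ} ⊆ Γ` with `⊢ (γ ∧ γ₁ ∧ … ∧ γₙ) → φ`. -/
def Deriv (Ax Γ : Set Formula) (φ : Formula) : Prop :=
  Prf Ax φ ∨ ∃ (γ : Formula) (l : List Formula),
    γ ∈ Γ ∧ (∀ ψ ∈ l, ψ ∈ Γ) ∧ Prf Ax (imp (conjL γ l) φ)

section Helpers
open Formula
variable {Ax : Set Formula}

theorem Prf.id (a : Formula) : Prf Ax (imp a a) :=
  .mp (.mp (.ax2 a (imp a a) a) (.ax1 a (imp a a))) (.ax1 a a)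

theorem Prf.comp {a b c : Formula} (hbc : Prf Ax (imp b c)) (hab : Prf Ax (imp a b)) :
    Prf Ax (imp a c) :=
  .mp (.mp (.ax2 a b c) (.mp (.ax1 (imp b c) a) hbc)) hab

/-- From `X → (Y → Z)` and `Y` infer `X → Z`. -/
theorem Prf.mpUnder {x y z : Formula} (h : Prf Ax (imp x (imp y z))) (hy : Prf Ax y) :
    Prf Ax (imp x z) :=
  .mp (.mp (.ax2 x y z) h) (.mp (.ax1 y x) hy)

/-- B combinator: `(b→c) → ((a→b) → (a→c))`. -/
theorem Prf.B (a b c : Formula) :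
    Prf Ax (imp (imp b c) (imp (imp a b) (imp a c))) :=
  .comp (.ax2 a b c) (.ax1 (imp b c) a)

theorem Prf.precomp {a a' b : Formula} (h : Prf Ax (imp a' a)) :
    Prf Ax (imp (imp a b) (imp a' b)) :=
  Prf.mpUnder (Prf.comp (.ax2 a' a b) (.ax1 (imp a b) a')) h

theorem Prf.impCong {a a' b b' : Formula} (ha : Prf Ax (imp a' a)) (hb : Prf Ax (imp b b')) :
    Prf Ax (imp (imp a b) (imp a' b')) :=
  Prf.comp (Prf.precomp ha) (.mp (Prf.B a b b') hb)

theorem Prf.pair {x y z : Formula} (h1 : Prf Ax (imp x y)) (h2 : Prf Ax (imp x z)) :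
    Prf Ax (imp x (and y z)) :=
  .mp (.mp (.ax2 x z (and y z)) (Prf.comp (.ax3 y z) h1)) h2

theorem Prf.andCong {a a' b b' : Formula} (ha : Prf Ax (imp a a')) (hb : Prf Ax (imp b b')) :
    Prf Ax (imp (and a b) (and a' b')) :=
  Prf.pair (Prf.comp ha (.ax4 a b)) (Prf.comp hb (.ax5 a b))

theorem Prf.orCong {a a' b b' : Formula} (ha : Prf Ax (imp a a')) (hb : Prf Ax (imp b b')) :
    Prf Ax (imp (or a b) (or a' b')) :=
  .mp (.mp (.ax8 a b (or a' b')) (Prf.comp (.ax6 a' b') ha)) (Prf.comp (.ax7 a' b') hb)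

theorem Prf.iff1 {a b : Formula} (h : Prf Ax (iffF a b)) : Prf Ax (imp a b) :=
  .mp (.ax4 _ _) h

theorem Prf.iff2 {a b : Formula} (h : Prf Ax (iffF a b)) : Prf Ax (imp b a) :=
  .mp (.ax5 _ _) h

theorem Prf.iffIntro {a b : Formula} (h1 : Prf Ax (imp a b)) (h2 : Prf Ax (imp b a)) :
    Prf Ax (iffF a b) :=
  .mp (.mp (.ax3 _ _) h1) h2

theorem Prf.iffRefl (a : Formula) : Prf Ax (iffF a a) :=
  Prf.iffIntro (Prf.id a) (Prf.id a)

end Helpers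

open Formula in
/-- Theorem 2.5: Let L be RmbC, or any extension of RmbC by further
axiom schemas over Σ (`Ax` is the set of instances of the extra schemas; derivations
as in RmbC).  If `α ↔ β` is a theorem of L then `γ[p/α] ↔ γ[p/β]` is a theorem of L,
for every formula `γ` and variable `p`. -/
theorem replacement_property (Ax : Set Formula) (α β : Formula)
    (h : Prf Ax (iffF α β)) (γ : Formula) (p : ℕ) :
    Prf Ax (iffF (Formula.subst p α γ) (Formula.subst p β γ)) := by
  induction γ with
  | var q =>
      by_cases hq : q = p
      · simpa [Formula.subst, hq] using h
      · simpa [Formula.subst, hq] using Prf.iffRefl (Ax := Ax) (Formula.var q)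
  | and a b iha ihb =>
      exact Prf.iffIntro (Prf.andCong iha.iff1 ihb.iff1) (Prf.andCong iha.iff2 ihb.iff2)
  | or a b iha ihb =>
      exact Prf.iffIntro (Prf.orCong iha.iff1 ihb.iff1) (Prf.orCong iha.iff2 ihb.iff2)
  | imp a b iha ihb =>
      exact Prf.iffIntro (Prf.impCong iha.iff2 ihb.iff1) (Prf.impCong iha.iff1 ihb.iff2)
  | neg a iha => exact iha.rneg
  | circ a iha => exact iha.rcirc

end LFI
end

section
/- Soundness of RmbC with respect to BALFI semantics: for every set of formulas Γ ∪ {φ} over Σ, if Γ ⊢_RmbC φ then Γ ⊨_BI φ. -/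
namespace LFI

open Formula

/-- The conditions making unary operations `nB` (¬) and `cB` (∘) on a Boolean algebra
into LFI operators: `a ∨ ¬a = 1` and `a ∧ ¬a ∧ ∘a = 0`.  A BALFI is a Boolean algebra
equipped with two such operations. -/
def IsBALFI {A : Type*} [BooleanAlgebra A] (nB cB : A → A) : Prop :=
  (∀ a : A, a ⊔ nB a = ⊤) ∧ (∀ a : A, a ⊓ nB a ⊓ cB a = ⊥)

/-- The valuation (Σ-homomorphism) on a BALFI determined by the assignment `d` of
values to propositional variables;  `→` is interpreted as Boolean implication `aᶜ ⊔ b`. -/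
def eval {A : Type*} [BooleanAlgebra A] (nB cB : A → A) (d : ℕ → A) : Formula → A
  | .var n => d n
  | .and a b => eval nB cB d a ⊓ eval nB cB d b
  | .or a b => eval nB cB d a ⊔ eval nB cB d b
  | .imp a b => (eval nB cB d a)ᶜ ⊔ eval nB cB d b
  | .neg a => nB (eval nB cB d a)
  | .circ a => cB (eval nB cB d a)

/-- `φ` is valid in the class BI of all BALFIs. -/
def BIValid (φ : Formula) : Prop :=
  ∀ (A : Type) [BooleanAlgebra A], ∀ nB cB : A → A, IsBALFI nB cB →
    ∀ d : ℕ → A, eval nB cB d φ = ⊤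

/-- Local (degree-preserving) BALFI consequence: `Γ ⊨_BI φ` iff `φ` is valid in BI, or
there is a finite nonempty subset of `Γ` whose meet of values is `≤ v(φ)` in every
BALFI under every valuation. -/
def BIConseq (Γ : Set Formula) (φ : Formula) : Prop :=
  BIValid φ ∨ ∃ (γ : Formula) (l : List Formula), γ ∈ Γ ∧ (∀ ψ ∈ l, ψ ∈ Γ) ∧
    ∀ (A : Type) [BooleanAlgebra A], ∀ nB cB : A → A, IsBALFI nB cB →
      ∀ d : ℕ → A, eval nB cB d (Formula.conjL γ l) ≤ eval nB cB d φ


section BAFacts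
variable {A : Type*} [BooleanAlgebra A]

private lemma hiLFI (x y : A) : xᶜ ⊔ y = x ⇨ y := by rw [himp_eq, sup_comm]

private lemma csTop (x y : A) : xᶜ ⊔ y = ⊤ ↔ x ≤ y := by rw [hiLFI, himp_eq_top_iff]

end BAFacts

theorem prf_valid {φ : Formula} (h : Prf ∅ φ) : BIValid φ := by
  induction h with
  | ax1 a b =>
    intro A _ nB cB hB d
    simp only [eval]
    exact (csTop _ _).2 le_sup_right
  | ax2 a b c =>
    intro A _ nB cB hB d
    simp only [eval]
    set x := eval nB cB d a; set y := eval nB cB d b; set z := eval nB cB d c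
    simp only [hiLFI, himp_eq_top_iff, le_himp_iff]
    calc (x ⇨ y ⇨ z) ⊓ (x ⇨ y) ⊓ x = (x ⇨ y ⇨ z) ⊓ x ⊓ ((x ⇨ y) ⊓ x) := by
          rw [inf_inf_distrib_right]
      _ ≤ (y ⇨ z) ⊓ y := inf_le_inf himp_inf_le himp_inf_le
      _ ≤ z := himp_inf_le
  | ax3 a b =>
    intro A _ nB cB hB d
    simp only [eval, hiLFI, himp_eq_top_iff, le_himp_iff]
    exact le_rfl
  | ax4 a b =>
    intro A _ nB cB hB d
    simp only [eval]
    exact (csTop _ _).2 inf_le_left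
  | ax5 a b =>
    intro A _ nB cB hB d
    simp only [eval]
    exact (csTop _ _).2 inf_le_right
  | ax6 a b =>
    intro A _ nB cB hB d
    simp only [eval]
    exact (csTop _ _).2 le_sup_left
  | ax7 a b =>
    intro A _ nB cB hB d
    simp only [eval]
    exact (csTop _ _).2 le_sup_right
  | ax8 a b c =>
    intro A _ nB cB hB d
    simp only [eval]
    set x := eval nB cB d a; set y := eval nB cB d b; set z := eval nB cB d c
    simp only [hiLFI, himp_eq_top_iff, le_himp_iff]
    rw [inf_sup_left]
    apply sup_le
    · calc (x ⇨ z) ⊓ (y ⇨ z) ⊓ x ≤ (x ⇨ z) ⊓ x := by gcongr; exact inf_le_left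
        _ ≤ z := himp_inf_le
    · calc (x ⇨ z) ⊓ (y ⇨ z) ⊓ y ≤ (y ⇨ z) ⊓ y := by gcongr; exact inf_le_right
        _ ≤ z := himp_inf_le
  | ax9 a b =>
    intro A _ nB cB hB d
    simp only [eval]
    set x := eval nB cB d a; set y := eval nB cB d b
    rw [sup_assoc, sup_comm y x, ← sup_assoc]
    simp
  | ax10 a =>
    intro A _ nB cB hB d
    simp only [eval]
    exact hB.1 _
  | bc1 a b =>
    intro A _ nB cB hB d
    simp only [eval]
    set x := eval nB cB d a; set y := eval nB cB d b
    simp only [hiLFI, himp_eq_top_iff, le_himp_iff]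
    have hb : cB x ⊓ x ⊓ nB x = ⊥ := by rw [← hB.2 x]; ac_rfl
    rw [hb]; exact bot_le
  | ext hmem => exact absurd hmem (Set.notMem_empty _)
  | mp _ _ ih1 ih2 =>
    intro A _ nB cB hB d
    have h1 := ih1 A nB cB hB d
    have h2 := ih2 A nB cB hB d
    simp only [eval] at h1
    rw [h2, compl_top, bot_sup_eq] at h1
    exact h1
  | rneg _ ih =>
    intro A _ nB cB hB d
    have h1 := ih A nB cB hB d
    simp only [iffF, eval, inf_eq_top_iff] at h1 ⊢
    have heq : eval nB cB d _ = eval nB cB d _ :=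
      le_antisymm ((csTop _ _).1 h1.1) ((csTop _ _).1 h1.2)
    rw [heq]
    simp
  | rcirc _ ih =>
    intro A _ nB cB hB d
    have h1 := ih A nB cB hB d
    simp only [iffF, eval, inf_eq_top_iff] at h1 ⊢
    have heq : eval nB cB d _ = eval nB cB d _ :=
      le_antisymm ((csTop _ _).1 h1.1) ((csTop _ _).1 h1.2)
    rw [heq]
    simp

/-- Theorem 2.10, Soundness of RmbC w.r.t. BALFI semantics:
if `Γ ⊢_RmbC φ` then `Γ ⊨_BI φ`. -/
theorem rmbc_soundness (Γ : Set Formula) (φ : Formula)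
    (h : Deriv ∅ Γ φ) : BIConseq Γ φ := by
  rcases h with hp | ⟨γ, l, hγ, hl, hp⟩
  · exact Or.inl (prf_valid hp)
  · refine Or.inr ⟨γ, l, hγ, hl, ?_⟩
    intro A _ nB cB hB d
    have h1 := prf_valid hp A nB cB hB d
    simp only [eval] at h1
    exact (csTop _ _).1 h1

end LFI
end

section
/- Completeness of RmbC with respect to BALFI semantics: for every set of formulas Γ ∪ {φ} over Σ, if Γ ⊨_BI φ then Γ ⊢_RmbC φ. -/
namespace LFI

open Formula

/-- The fixed bottom formula `∘p₀ ∧ (p₀ ∧ ¬p₀)`. -/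
def botF : Formula := .and (.circ (.var 0)) (.and (.var 0) (.neg (.var 0)))
/-- The fixed top formula `⊥ → ⊥`. -/
def topF : Formula := .imp botF botF

inductive PrfH : List Formula → Formula → Prop
  | hyp {Γ a} : a ∈ Γ → PrfH Γ a
  | ax1 (Γ a b) : PrfH Γ (imp a (imp b a))
  | ax2 (Γ a b c) : PrfH Γ (imp (imp a (imp b c)) (imp (imp a b) (imp a c)))
  | ax3 (Γ a b) : PrfH Γ (imp a (imp b (and a b)))
  | ax4 (Γ a b) : PrfH Γ (imp (and a b) a)
  | ax5 (Γ a b) : PrfH Γ (imp (and a b) b)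
  | ax6 (Γ a b) : PrfH Γ (imp a (or a b))
  | ax7 (Γ a b) : PrfH Γ (imp b (or a b))
  | ax8 (Γ a b c) : PrfH Γ (imp (imp a c) (imp (imp b c) (imp (or a b) c)))
  | ax9 (Γ a b) : PrfH Γ (or (imp a b) a)
  | ax10 (Γ a) : PrfH Γ (or a (neg a))
  | bc1 (Γ a b) : PrfH Γ (imp (circ a) (imp a (imp (neg a) b)))
  | mp {Γ a b} : PrfH Γ (imp a b) → PrfH Γ a → PrfH Γ b

namespace PrfH

theorem impRefl (Γ a) : PrfH Γ (imp a a) :=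
  mp (mp (ax2 Γ a (imp a a) a) (ax1 Γ a (imp a a))) (ax1 Γ a a)

theorem weaken {Γ Δ a} (hs : ∀ x ∈ Γ, x ∈ Δ) (h : PrfH Γ a) : PrfH Δ a := by
  induction h generalizing Δ with
  | hyp hm => exact hyp (hs _ hm)
  | mp _ _ ih1 ih2 => exact mp (ih1 hs) (ih2 hs)
  | ax1 => exact ax1 ..
  | ax2 => exact ax2 ..
  | ax3 => exact ax3 ..
  | ax4 => exact ax4 ..
  | ax5 => exact ax5 ..
  | ax6 => exact ax6 ..
  | ax7 => exact ax7 ..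
  | ax8 => exact ax8 ..
  | ax9 => exact ax9 ..
  | ax10 => exact ax10 ..
  | bc1 => exact bc1 ..

theorem w {Γ a b} (h : PrfH Γ b) : PrfH (a :: Γ) b :=
  weaken (fun _ hx => .tail _ hx) h

theorem ded_aux {Δ b} (h : PrfH Δ b) :
    ∀ {a Γ}, Δ = a :: Γ → PrfH Γ (imp a b) := by
  induction h with
  | hyp hm =>
      intro a Γ hΔ
      subst hΔ
      cases hm with
      | head => exact impRefl ..
      | tail _ hm => exact mp (ax1 ..) (hyp hm)
  | mp _ _ ih1 ih2 => intro a Γ hΔ; exact mp (mp (ax2 ..) (ih1 hΔ)) (ih2 hΔ)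
  | ax1 => intro a Γ hΔ; exact mp (ax1 ..) (ax1 ..)
  | ax2 => intro a Γ hΔ; exact mp (ax1 ..) (ax2 ..)
  | ax3 => intro a Γ hΔ; exact mp (ax1 ..) (ax3 ..)
  | ax4 => intro a Γ hΔ; exact mp (ax1 ..) (ax4 ..)
  | ax5 => intro a Γ hΔ; exact mp (ax1 ..) (ax5 ..)
  | ax6 => intro a Γ hΔ; exact mp (ax1 ..) (ax6 ..)
  | ax7 => intro a Γ hΔ; exact mp (ax1 ..) (ax7 ..)
  | ax8 => intro a Γ hΔ; exact mp (ax1 ..) (ax8 ..)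
  | ax9 => intro a Γ hΔ; exact mp (ax1 ..) (ax9 ..)
  | ax10 => intro a Γ hΔ; exact mp (ax1 ..) (ax10 ..)
  | bc1 => intro a Γ hΔ; exact mp (ax1 ..) (bc1 ..)

theorem ded {Γ a b} (h : PrfH (a :: Γ) b) : PrfH Γ (imp a b) :=
  ded_aux h rfl

theorem h0 {Γ a} : PrfH (a :: Γ) a := hyp (.head _)
theorem h1 {Γ a b} : PrfH (a :: b :: Γ) b := hyp (.tail _ (.head _))
theorem h2 {Γ a b c} : PrfH (a :: b :: c :: Γ) c := hyp (.tail _ (.tail _ (.head _)))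
theorem h3 {Γ a b c d} : PrfH (a :: b :: c :: d :: Γ) d :=
  hyp (.tail _ (.tail _ (.tail _ (.head _))))

theorem andI {Γ a b} (ha : PrfH Γ a) (hb : PrfH Γ b) : PrfH Γ (and a b) :=
  mp (mp (ax3 ..) ha) hb
theorem andE1 {Γ a b} (h : PrfH Γ (and a b)) : PrfH Γ a := mp (ax4 ..) h
theorem andE2 {Γ a b} (h : PrfH Γ (and a b)) : PrfH Γ b := mp (ax5 ..) h
theorem orI1 {Γ a b} (h : PrfH Γ a) : PrfH Γ (or a b) := mp (ax6 ..) h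
theorem orI2 {Γ a b} (h : PrfH Γ b) : PrfH Γ (or a b) := mp (ax7 ..) h
theorem orE {Γ a b c} (h : PrfH Γ (or a b)) (hac : PrfH (a :: Γ) c)
    (hbc : PrfH (b :: Γ) c) : PrfH Γ c :=
  mp (mp (mp (ax8 ..) (ded hac)) (ded hbc)) h

theorem efq {Γ c} (h : PrfH Γ botF) : PrfH Γ c :=
  mp (mp (mp (bc1 Γ (.var 0) c) (andE1 h)) (andE1 (andE2 h))) (andE2 (andE2 h))

theorem topI (Γ) : PrfH Γ topF := impRefl ..

end PrfH

theorem PrfH.toPrf_aux {Δ : List Formula} {a : Formula} (h : PrfH Δ a) :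
    Δ = [] → Prf ∅ a := by
  induction h with
  | hyp hm => intro hΔ; subst hΔ; cases hm
  | mp _ _ ih1 ih2 => intro hΔ; exact .mp (ih1 hΔ) (ih2 hΔ)
  | ax1 => intro _; exact .ax1 ..
  | ax2 => intro _; exact .ax2 ..
  | ax3 => intro _; exact .ax3 ..
  | ax4 => intro _; exact .ax4 ..
  | ax5 => intro _; exact .ax5 ..
  | ax6 => intro _; exact .ax6 ..
  | ax7 => intro _; exact .ax7 ..
  | ax8 => intro _; exact .ax8 ..
  | ax9 => intro _; exact .ax9 ..
  | ax10 => intro _; exact .ax10 ..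
  | bc1 => intro _; exact .bc1 ..

theorem PrfH.toPrf {a : Formula} (h : PrfH [] a) : Prf ∅ a := toPrf_aux h rfl

----------------------------------------------------------------
-- Theorems of RmbC
----------------------------------------------------------------

namespace RT
open PrfH

theorem impRefl (a : Formula) : Prf ∅ (imp a a) := (PrfH.impRefl [] a).toPrf

/-- (a→b)→((b→c)→(a→c)) -/
theorem transT (a b c : Formula) :
    Prf ∅ (imp (imp a b) (imp (imp b c) (imp a c))) :=
  (ded (ded (ded (mp h1 (mp h2 h0))))).toPrf

theorem trans {a b c : Formula} (h1 : Prf ∅ (imp a b)) (h2 : Prf ∅ (imp b c)) :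
    Prf ∅ (imp a c) := .mp (.mp (transT a b c) h1) h2

/-- (c→a)→((c→b)→(c→(a∧b))) -/
theorem leInfT (a b c : Formula) :
    Prf ∅ (imp (imp c a) (imp (imp c b) (imp c (and a b)))) :=
  (ded (ded (ded (andI (mp h2 h0) (mp h1 h0))))).toPrf

theorem leInf {a b c : Formula} (h1 : Prf ∅ (imp c a)) (h2 : Prf ∅ (imp c b)) :
    Prf ∅ (imp c (and a b)) := .mp (.mp (leInfT a b c) h1) h2

theorem supLe {a b c : Formula} (h1 : Prf ∅ (imp a c)) (h2 : Prf ∅ (imp b c)) :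
    Prf ∅ (imp (or a b) c) := .mp (.mp (.ax8 a b c) h1) h2

theorem andMono {a a' b b' : Formula} (h1 : Prf ∅ (imp a a')) (h2 : Prf ∅ (imp b b')) :
    Prf ∅ (imp (and a b) (and a' b')) :=
  leInf (trans (.ax4 a b) h1) (trans (.ax5 a b) h2)

theorem orMono {a a' b b' : Formula} (h1 : Prf ∅ (imp a a')) (h2 : Prf ∅ (imp b b')) :
    Prf ∅ (imp (or a b) (or a' b')) :=
  supLe (trans h1 (.ax6 a' b')) (trans h2 (.ax7 a' b'))

/-- (a'→a)→((b→b')→((a→b)→(a'→b'))) -/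
theorem impMonoT (a a' b b' : Formula) :
    Prf ∅ (imp (imp a' a) (imp (imp b b') (imp (imp a b) (imp a' b')))) :=
  (ded (ded (ded (ded (mp h2 (mp h1 (mp h3 h0))))))).toPrf

theorem impMono {a a' b b' : Formula} (h1 : Prf ∅ (imp a' a)) (h2 : Prf ∅ (imp b b')) :
    Prf ∅ (imp (imp a b) (imp a' b')) := .mp (.mp (impMonoT ..) h1) h2

/-- distributivity direction: (a∨b)∧(a∨c) → a∨(b∧c) -/
theorem distribT (a b c : Formula) :
    Prf ∅ (imp (and (or a b) (or a c)) (or a (and b c))) := by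
  refine (ded ?_).toPrf
  refine orE (andE1 h0) (orI1 h0) ?_
  refine orE (andE2 h1) (orI1 h0) ?_
  exact orI2 (andI h1 h0)

theorem botLe (a : Formula) : Prf ∅ (imp botF a) := (ded (efq h0)).toPrf

theorem leTop (a : Formula) : Prf ∅ (imp a topF) :=
  (mp (ax1 [] topF a) (topI [])).toPrf

/-- a ∧ (a→⊥) → ⊥ -/
theorem infComplT (a : Formula) : Prf ∅ (imp (and a (imp a botF)) botF) :=
  (ded (mp (andE2 h0) (andE1 h0))).toPrf

/-- a ∨ (a→⊥) -/
theorem supCompl (a : Formula) : Prf ∅ (or a (imp a botF)) :=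
  (orE (ax9 [] a botF) (orI2 h0) (orI1 h0)).toPrf

/-- ((a→⊥)∨b) → (a→b) -/
theorem impOfOr (a b : Formula) : Prf ∅ (imp (or (imp a botF) b) (imp a b)) := by
  refine (ded ?_).toPrf
  refine orE h0 (ded (efq (mp h1 h0))) (ded h1)

/-- (a→b) → ((a→⊥)∨b) -/
theorem orOfImp (a b : Formula) : Prf ∅ (imp (imp a b) (or (imp a botF) b)) := by
  refine (ded ?_).toPrf
  exact orE (ax9 _ a botF) (orI1 h0) (orI2 (mp h1 h0))

/-- (a ∧ ¬a) ∧ ∘a → ⊥ -/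
theorem lfiT (a : Formula) : Prf ∅ (imp (and (and a (neg a)) (circ a)) botF) :=
  (ded (mp (mp (mp (bc1 _ a botF) (andE2 h0)) (andE1 (andE1 h0)))
      (andE2 (andE1 h0)))).toPrf

theorem topImp {a : Formula} (h : Prf ∅ a) : Prf ∅ (imp topF a) :=
  .mp (.ax1 a topF) h

end RT

----------------------------------------------------------------
-- The Lindenbaum–Tarski BALFI
----------------------------------------------------------------

def Eqv (a b : Formula) : Prop := Prf ∅ (iffF a b)

theorem Eqv.iffI {a b : Formula} (h1 : Prf ∅ (imp a b)) (h2 : Prf ∅ (imp b a)) :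
    Eqv a b := .mp (.mp (.ax3 ..) h1) h2

theorem Eqv.mp1 {a b : Formula} (h : Eqv a b) : Prf ∅ (imp a b) := .mp (.ax4 ..) h
theorem Eqv.mp2 {a b : Formula} (h : Eqv a b) : Prf ∅ (imp b a) := .mp (.ax5 ..) h

instance formulaSetoid : Setoid Formula where
  r := Eqv
  iseqv := ⟨fun a => Eqv.iffI (RT.impRefl a) (RT.impRefl a),
    fun h => Eqv.iffI h.mp2 h.mp1,
    fun h1 h2 => Eqv.iffI (RT.trans h1.mp1 h2.mp1) (RT.trans h2.mp2 h1.mp2)⟩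

def LT : Type := Quotient formulaSetoid

namespace LT

def mk (a : Formula) : LT := Quotient.mk formulaSetoid a

instance : PartialOrder LT where
  le := Quotient.lift₂ (fun a b => Prf ∅ (imp a b)) (by
    intro a b a' b' ha hb
    exact propext ⟨fun h => RT.trans (RT.trans ha.mp2 h) hb.mp1,
      fun h => RT.trans (RT.trans ha.mp1 h) hb.mp2⟩)
  le_refl := fun q => Quotient.inductionOn q fun a => RT.impRefl a
  le_trans := fun q r s => Quotient.inductionOn₃ q r s fun a b c h1 h2 => RT.trans h1 h2
  le_antisymm := fun q r => Quotient.inductionOn₂ q r fun a b h1 h2 =>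
    Quotient.sound (Eqv.iffI h1 h2)

instance : Lattice LT :=
  { (inferInstance : PartialOrder LT) with
    inf := Quotient.map₂ .and (fun _ _ ha _ _ hb =>
      Eqv.iffI (RT.andMono ha.mp1 hb.mp1) (RT.andMono ha.mp2 hb.mp2))
    sup := Quotient.map₂ .or (fun _ _ ha _ _ hb =>
      Eqv.iffI (RT.orMono ha.mp1 hb.mp1) (RT.orMono ha.mp2 hb.mp2))
    inf_le_left := fun q r => Quotient.inductionOn₂ q r fun a b => Prf.ax4 a b
    inf_le_right := fun q r => Quotient.inductionOn₂ q r fun a b => Prf.ax5 a b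
    le_inf := fun q r s => Quotient.inductionOn₃ q r s
      fun _ _ _ h1 h2 => RT.leInf h1 h2
    le_sup_left := fun q r => Quotient.inductionOn₂ q r fun a b => Prf.ax6 a b
    le_sup_right := fun q r => Quotient.inductionOn₂ q r fun a b => Prf.ax7 a b
    sup_le := fun q r s => Quotient.inductionOn₃ q r s
      fun _ _ _ h1 h2 => RT.supLe h1 h2 }

instance : DistribLattice LT :=
  { (inferInstance : Lattice LT) with
    le_sup_inf := fun q r s => Quotient.inductionOn₃ q r s
      fun a b c => RT.distribT a b c }

instance : BooleanAlgebra LT :=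
  { (inferInstance : DistribLattice LT) with
    top := mk topF
    bot := mk botF
    compl := Quotient.map (fun a => .imp a botF) (fun _ _ h =>
      Eqv.iffI (RT.impMono h.mp2 (RT.impRefl botF)) (RT.impMono h.mp1 (RT.impRefl botF)))
    le_top := fun q => Quotient.inductionOn q fun a => RT.leTop a
    bot_le := fun q => Quotient.inductionOn q fun a => RT.botLe a
    inf_compl_le_bot := fun q => Quotient.inductionOn q fun a => RT.infComplT a
    top_le_sup_compl := fun q => Quotient.inductionOn q fun a =>
      RT.topImp (RT.supCompl a)
    sdiff_eq := fun _ _ => rfl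
    himp_eq := fun _ _ => rfl }

def nQ : LT → LT := Quotient.map .neg (fun _ _ h => Prf.rneg h)
def cQ : LT → LT := Quotient.map .circ (fun _ _ h => Prf.rcirc h)

theorem top_def : (⊤ : LT) = mk topF := rfl
theorem eq_top_iff_prf {a : Formula} : mk a = (⊤ : LT) ↔ Prf ∅ a := by
  constructor
  · intro h
    have := Quotient.exact (s := formulaSetoid) (h.trans top_def)
    exact .mp this.mp2 (PrfH.topI []).toPrf
  · intro h
    exact le_antisymm (RT.leTop a) (Prf.mp (.ax1 a topF) h)

theorem isBALFI : IsBALFI nQ cQ := by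
  constructor
  · intro q
    refine Quotient.inductionOn q fun a => ?_
    show mk (.or a (.neg a)) = ⊤
    exact eq_top_iff_prf.2 (Prf.ax10 a)
  · intro q
    refine Quotient.inductionOn q fun a => ?_
    show mk (.and (.and a (.neg a)) (.circ a)) = (⊥ : LT)
    exact le_antisymm (RT.lfiT a) (RT.botLe _)

theorem eval_eq (γ : Formula) :
    eval nQ cQ (fun n => mk (.var n)) γ = mk γ := by
  induction γ with
  | var n => rfl
  | and a b iha ihb => show _ ⊓ _ = _; rw [iha, ihb]; rfl
  | or a b iha ihb => show _ ⊔ _ = _; rw [iha, ihb]; rfl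
  | imp a b iha ihb =>
      show (_)ᶜ ⊔ _ = _
      rw [iha, ihb]
      show mk (.or (.imp a botF) b) = mk (.imp a b)
      exact Quotient.sound (Eqv.iffI (RT.impOfOr a b) (RT.orOfImp a b))
  | neg a iha => show nQ _ = _; rw [iha]; rfl
  | circ a iha => show cQ _ = _; rw [iha]; rfl

end LT

/-- Theorem 2.11, Completeness of RmbC w.r.t. BALFI semantics:
if `Γ ⊨_BI φ` then `Γ ⊢_RmbC φ`. -/
theorem rmbc_completeness (Γ : Set Formula) (φ : Formula)
    (h : BIConseq Γ φ) : Deriv ∅ Γ φ := by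
  rcases h with h | ⟨γ, l, hγ, hl, hle⟩
  · left
    have hv := h LT LT.nQ LT.cQ LT.isBALFI (fun n => LT.mk (.var n))
    rw [LT.eval_eq] at hv
    exact LT.eq_top_iff_prf.1 hv
  · right
    refine ⟨γ, l, hγ, hl, ?_⟩
    have hv := hle LT LT.nQ LT.cQ LT.isBALFI (fun n => LT.mk (.var n))
    rw [LT.eval_eq, LT.eval_eq] at hv
    exact hv

end LFI
end

section
/- Let B be a BALFI with carrier A. Then B is a model of the axiom schema (ciw): ∘α ∨ (α ∧ ¬α) if and only if B satisfies the equation ∘a = ∼(a ∧ ¬a) for every a ∈ A, where ∼ is the Boolean complement of B. -/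
namespace LFI

open Formula

/-- Instances of the schema (ciw): `∘α ∨ (α ∧ ¬α)`. -/
def ciwSet : Set Formula := { f | ∃ a, f = .or (.circ a) (.and a (.neg a)) }
/-- Instances of the schema (ci): `¬∘α → (α ∧ ¬α)`. -/
def ciSet : Set Formula := { f | ∃ a, f = .imp (.neg (.circ a)) (.and a (.neg a)) }
/-- Instances of the schema (cl): `¬(α ∧ ¬α) → ∘α`. -/
def clSet : Set Formula := { f | ∃ a, f = .imp (.neg (.and a (.neg a))) (.circ a) }
/-- Instances of the schema (cf): `¬¬α → α`. -/
def cfSet : Set Formula := { f | ∃ a, f = .imp (.neg (.neg a)) a }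
/-- Instances of the schema (ce): `α → ¬¬α`. -/
def ceSet : Set Formula := { f | ∃ a, f = .imp a (.neg (.neg a)) }
/-- Instances of the schema (ca∧): `(∘α ∧ ∘β) → ∘(α ∧ β)`. -/
def caAndSet : Set Formula :=
  { f | ∃ a b, f = .imp (.and (.circ a) (.circ b)) (.circ (.and a b)) }
/-- Instances of the schema (ca∨): `(∘α ∧ ∘β) → ∘(α ∨ β)`. -/
def caOrSet : Set Formula :=
  { f | ∃ a b, f = .imp (.and (.circ a) (.circ b)) (.circ (.or a b)) }
/-- Instances of the schema (ca→): `(∘α ∧ ∘β) → ∘(α → β)`. -/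
def caImpSet : Set Formula :=
  { f | ∃ a b, f = .imp (.and (.circ a) (.circ b)) (.circ (.imp a b)) }

/-- The eight extension axiom schemas of Definition 3.1. -/
inductive Schema : Type
  | ciw | ci | cl | cf | ce | caAnd | caOr | caImp

/-- The set of instances of a schema. -/
def Schema.instSet : Schema → Set Formula
  | .ciw => ciwSet
  | .ci => ciSet
  | .cl => clSet
  | .cf => cfSet
  | .ce => ceSet
  | .caAnd => caAndSet
  | .caOr => caOrSet
  | .caImp => caImpSet

/-- The BALFI `(A, nB, cB)` is a model of every formula in `S` (as axiom schema
instances): all of them take value `⊤` under every valuation. -/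
def ModelsSet {A : Type*} [BooleanAlgebra A] (nB cB : A → A) (S : Set Formula) : Prop :=
  ∀ ψ ∈ S, ∀ d : ℕ → A, eval nB cB d ψ = ⊤

/-- Proposition 3.5(1): a BALFI is a model of (ciw): `∘α ∨ (α ∧ ¬α)`
iff it satisfies the equation `∘a = ∼(a ∧ ¬a)` for every `a`, where `∼` is the
Boolean complement. -/
theorem ciw_model_iff (A : Type) [BooleanAlgebra A] (nB cB : A → A)
    (hB : IsBALFI nB cB) :
    ModelsSet nB cB ciwSet ↔ ∀ a : A, cB a = (a ⊓ nB a)ᶜ := by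
  constructor
  · intro h a
    have h1 : cB a ⊔ (a ⊓ nB a) = ⊤ := by
      have := h (.or (.circ (.var 0)) (.and (.var 0) (.neg (.var 0))))
        ⟨.var 0, rfl⟩ (fun _ => a)
      simpa [eval] using this
    have h2 : cB a ⊓ (a ⊓ nB a) = ⊥ := by
      have := hB.2 a
      rw [← this]; ac_rfl
    exact eq_compl_iff_isCompl.mpr (IsCompl.of_eq h2 h1)
  · rintro h ψ ⟨α, rfl⟩ d
    simp only [eval, h]
    exact compl_sup_eq_top

end LFI
end

section
/- Let B be a BALFI with carrier A. Then B is a model of the axiom schema (ci): ¬∘α → (α ∧ ¬α) if and only if B satisfies the equation ¬∘a = a ∧ ¬a for every a ∈ A; and B is a model of the axiom schema (cl): ¬(α ∧ ¬α) → ∘α if and only if B satisfies the equation ∘a = ¬(a ∧ ¬a) for every a ∈ A. -/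
namespace LFI

open Formula

/-- Proposition 3.5(2),(3): a BALFI is a model of (ci): `¬∘α → (α ∧ ¬α)`
iff `¬∘a = a ∧ ¬a` for every `a`; and it is a model of (cl): `¬(α ∧ ¬α) → ∘α` iff
`∘a = ¬(a ∧ ¬a)` for every `a`. -/
theorem ci_cl_model_iff (A : Type) [BooleanAlgebra A] (nB cB : A → A)
    (hB : IsBALFI nB cB) :
    (ModelsSet nB cB ciSet ↔ ∀ a : A, nB (cB a) = a ⊓ nB a) ∧
    (ModelsSet nB cB clSet ↔ ∀ a : A, cB a = nB (a ⊓ nB a)) := by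
  obtain ⟨h1, h2⟩ := hB
  have key : ∀ x y : A, xᶜ ⊔ y = ⊤ ↔ x ≤ y := by
    intro x y
    constructor
    · intro h
      calc x = x ⊓ (xᶜ ⊔ y) := by rw [h, inf_top_eq]
      _ = x ⊓ y := by rw [inf_sup_left, inf_compl_eq_bot, bot_sup_eq]
      _ ≤ y := inf_le_right
    · intro h
      exact eq_top_iff.mpr (by rw [← compl_sup_eq_top (x := x)]; exact sup_le_sup_left h _)
  have key2 : ∀ x y : A, x ⊔ y = ⊤ → xᶜ ≤ y := fun x y h =>
    (key xᶜ y).mp (by rwa [compl_compl])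
  constructor
  · constructor
    · intro hM a
      have h := hM (.imp (.neg (.circ (.var 0))) (.and (.var 0) (.neg (.var 0))))
        ⟨.var 0, rfl⟩ (fun _ => a)
      simp only [eval] at h
      have hle : nB (cB a) ≤ a ⊓ nB a := (key _ _).mp h
      refine le_antisymm hle ?_
      have hc : a ⊓ nB a ≤ (cB a)ᶜ := by
        rw [le_compl_iff_disjoint_right, disjoint_iff]
        exact h2 a
      exact hc.trans (key2 _ _ (h1 (cB a)))
    · intro h ψ hψ d
      obtain ⟨α, rfl⟩ := hψ
      simp only [eval, h]
      exact compl_sup_eq_top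
  · constructor
    · intro hM a
      have h := hM (.imp (.neg (.and (.var 0) (.neg (.var 0)))) (.circ (.var 0)))
        ⟨.var 0, rfl⟩ (fun _ => a)
      simp only [eval] at h
      have hle : nB (a ⊓ nB a) ≤ cB a := (key _ _).mp h
      refine le_antisymm ?_ hle
      have hc : cB a ≤ (a ⊓ nB a)ᶜ := by
        rw [le_compl_iff_disjoint_right, disjoint_iff, inf_comm]
        exact h2 a
      exact hc.trans (key2 _ _ (h1 (a ⊓ nB a)))
    · intro h ψ hψ d
      obtain ⟨α, rfl⟩ := hψ
      simp only [eval, ← h]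
      exact compl_sup_eq_top


end LFI
end

section
/- The classes of BALFIs BI({ci,cf}), BI({cl,cf}) and BI({ci,cl,cf}) coincide: a BALFI is a model of both axiom schemas (ci) and (cf) if and only if it is a model of both (cl) and (cf), if and only if it is a model of all three of (ci), (cl) and (cf). -/
namespace LFI

open Formula

section Aux

variable {A : Type} [BooleanAlgebra A]

lemma aux_sup_top {a b : A} (h : a ⊔ b = ⊤) : aᶜ ≤ b := by
  calc aᶜ = aᶜ ⊓ (a ⊔ b) := by rw [h, inf_top_eq]
  _ = aᶜ ⊓ b := by rw [inf_sup_left, compl_inf_self, bot_sup_eq]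
  _ ≤ b := inf_le_right

lemma aux_inf_bot {a b : A} (h : a ⊓ b = ⊥) : a ≤ bᶜ :=
  le_compl_iff_disjoint_right.mpr (disjoint_iff.mpr h)

lemma aux_imp_top {a b : A} : aᶜ ⊔ b = ⊤ ↔ a ≤ b := by
  constructor
  · intro h
    have := aux_sup_top h
    rwa [compl_compl] at this
  · intro h
    rw [sup_comm, ← himp_eq, himp_eq_top_iff]; exact h

lemma models_ci_iff (nB cB : A → A) :
    ModelsSet nB cB ciSet ↔ ∀ z : A, nB (cB z) ≤ z ⊓ nB z := by
  constructor
  · intro h z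
    have := h _ ⟨.var 0, rfl⟩ (fun _ => z)
    simp only [eval] at this
    exact aux_imp_top.mp this
  · rintro h ψ ⟨a, rfl⟩ d
    simp only [eval]
    exact aux_imp_top.mpr (h _)

lemma models_cl_iff (nB cB : A → A) :
    ModelsSet nB cB clSet ↔ ∀ z : A, nB (z ⊓ nB z) ≤ cB z := by
  constructor
  · intro h z
    have := h _ ⟨.var 0, rfl⟩ (fun _ => z)
    simp only [eval] at this
    exact aux_imp_top.mp this
  · rintro h ψ ⟨a, rfl⟩ d
    simp only [eval]
    exact aux_imp_top.mpr (h _)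

lemma models_cf_iff (nB cB : A → A) :
    ModelsSet nB cB cfSet ↔ ∀ z : A, nB (nB z) ≤ z := by
  constructor
  · intro h z
    have := h _ ⟨.var 0, rfl⟩ (fun _ => z)
    simp only [eval] at this
    exact aux_imp_top.mp this
  · rintro h ψ ⟨a, rfl⟩ d
    simp only [eval]
    exact aux_imp_top.mpr (h _)

lemma ci_cf_imp_cl (nB cB : A → A) (hB : IsBALFI nB cB)
    (hci : ∀ z : A, nB (cB z) ≤ z ⊓ nB z) (hcf : ∀ z : A, nB (nB z) ≤ z) :
    ∀ z : A, nB (z ⊓ nB z) ≤ cB z := by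
  obtain ⟨h1, h2⟩ := hB
  intro x
  set y : A := x ⊓ nB x with hy
  -- cB x = yᶜ
  have hcx : cB x = yᶜ := by
    apply le_antisymm
    · exact aux_inf_bot (by rw [inf_comm]; exact h2 x)
    · have h3 : (cB x)ᶜ ≤ y := le_trans (aux_sup_top (h1 (cB x))) (hci x)
      calc yᶜ ≤ ((cB x)ᶜ)ᶜ := compl_le_compl h3
      _ = cB x := compl_compl _
  -- nB yᶜ = y
  have hny : nB yᶜ = y := by
    apply le_antisymm
    · rw [← hcx]; exact hci x
    · have := aux_sup_top (h1 yᶜ)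
      rwa [compl_compl] at this
  have := hcf yᶜ
  rw [hny] at this
  rw [hcx]
  exact this

lemma cl_cf_imp_ci (nB cB : A → A) (hB : IsBALFI nB cB)
    (hcl : ∀ z : A, nB (z ⊓ nB z) ≤ cB z) (hcf : ∀ z : A, nB (nB z) ≤ z) :
    ∀ z : A, nB (cB z) ≤ z ⊓ nB z := by
  obtain ⟨h1, h2⟩ := hB
  intro x
  set y : A := x ⊓ nB x with hy
  have hyc : yᶜ ≤ nB y := aux_sup_top (h1 y)
  have hcx : cB x = yᶜ := le_antisymm (aux_inf_bot (by rw [inf_comm]; exact h2 x))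
    (le_trans hyc (hcl x))
  have hnyy : nB y = yᶜ := le_antisymm (by rw [← hcx]; exact hcl x) hyc
  rw [hcx, ← hnyy]
  exact hcf y

end Aux

/-- Proposition 3.7: `BI({ci,cf}) = BI({cl,cf}) = BI({ci,cl,cf})`:
a BALFI is a model of both (ci) and (cf) iff it is a model of both (cl) and (cf),
iff it is a model of all three of (ci), (cl), (cf). -/
theorem bi_classes_coincide (A : Type) [BooleanAlgebra A] (nB cB : A → A)
    (hB : IsBALFI nB cB) :
    ((ModelsSet nB cB ciSet ∧ ModelsSet nB cB cfSet) ↔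
      (ModelsSet nB cB clSet ∧ ModelsSet nB cB cfSet)) ∧
    ((ModelsSet nB cB ciSet ∧ ModelsSet nB cB cfSet) ↔
      (ModelsSet nB cB ciSet ∧ ModelsSet nB cB clSet ∧ ModelsSet nB cB cfSet)) := by
  rw [models_ci_iff, models_cl_iff, models_cf_iff]
  constructor
  · constructor
    · rintro ⟨hci, hcf⟩
      exact ⟨ci_cf_imp_cl nB cB hB hci hcf, hcf⟩
    · rintro ⟨hcl, hcf⟩
      exact ⟨cl_cf_imp_ci nB cB hB hcl hcf, hcf⟩
  · constructor
    · rintro ⟨hci, hcf⟩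
      exact ⟨hci, ci_cf_imp_cl nB cB hB hci hcf, hcf⟩
    · rintro ⟨hci, _, hcf⟩
      exact ⟨hci, hcf⟩

end LFI
end

section
/- The necessitation rule for ∘ (from α infer ∘α) is admissible in the logic RmbC({cl,ce}): whenever ⊢_{RmbC({cl,ce})} α, it follows that ⊢_{RmbC({cl,ce})} ∘α. -/
namespace LFI

open Formula

/-- Proposition 3.9: the necessitation rule for ∘ is admissible in
RmbC({cl,ce}): if `⊢_{RmbC({cl,ce})} α` then `⊢_{RmbC({cl,ce})} ∘α`. -/
theorem nec_circ_admissible (α : Formula)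
    (h : Prf (clSet ∪ ceSet) α) : Prf (clSet ∪ ceSet) (Formula.circ α) := by
  -- (α∧¬α) → ¬α
  have h1 : Prf (clSet ∪ ceSet) (.imp (.and α (.neg α)) (.neg α)) := .ax5 _ _
  -- ¬α → (α∧¬α)
  have h2 : Prf (clSet ∪ ceSet) (.imp (.neg α) (.and α (.neg α))) :=
    .mp (.ax3 α (.neg α)) h
  -- iffF (α∧¬α) ¬α
  have h3 : Prf (clSet ∪ ceSet) (iffF (.and α (.neg α)) (.neg α)) :=
    .mp (.mp (.ax3 _ _) h1) h2
  have h4 := Prf.rneg h3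
  -- extract second component: ¬¬α → ¬(α∧¬α)
  have h5 : Prf (clSet ∪ ceSet)
      (.imp (.neg (.neg α)) (.neg (.and α (.neg α)))) :=
    .mp (.ax5 _ _) h4
  -- ¬¬α from (ce)
  have hce : Prf (clSet ∪ ceSet) (.imp α (.neg (.neg α))) :=
    .ext (Or.inr ⟨α, rfl⟩)
  have h6 : Prf (clSet ∪ ceSet) (.neg (.and α (.neg α))) :=
    .mp h5 (.mp hce h)
  have hcl : Prf (clSet ∪ ceSet) (.imp (.neg (.and α (.neg α))) (.circ α)) :=
    .ext (Or.inl ⟨α, rfl⟩)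
  exact .mp hcl h6

end LFI
end

section
/- Given a neighborhood frame F = ⟨W, S¬, S∘⟩ for RmbC, define unary operations on the powerset ℘(W) by ¬̃(X) = (W∖X) ∪ S¬(X) and ∘̃(X) = (W ∖ (X ∩ S¬(X))) ∩ S∘(X). Then B_F = ⟨℘(W), ∩, ∪, →, ¬̃, ∘̃, ∅, W⟩ is a BALFI (where X → Y = (W∖X) ∪ Y). Moreover, if M = ⟨F, d⟩ is a neighborhood model for RmbC over F, then the denotation function ⟦·⟧_M : For(Σ) → ℘(W) is a valuation over B_F. -/
namespace LFI

open Formula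

/-- The denotation function of the neighborhood model `⟨⟨W, Sn, Sc⟩, d⟩` for RmbC. -/
def nden {W : Type} (Sn Sc : Set W → Set W) (d : ℕ → Set W) : Formula → Set W
  | .var n => d n
  | .and a b => nden Sn Sc d a ∩ nden Sn Sc d b
  | .or a b => nden Sn Sc d a ∪ nden Sn Sc d b
  | .imp a b => (nden Sn Sc d a)ᶜ ∪ nden Sn Sc d b
  | .neg a => (nden Sn Sc d a)ᶜ ∪ Sn (nden Sn Sc d a)
  | .circ a =>
      (nden Sn Sc d a ∩ ((nden Sn Sc d a)ᶜ ∪ Sn (nden Sn Sc d a)))ᶜ ∩ Sc (nden Sn Sc d a)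

/-- `φ` is valid w.r.t. neighborhood models: true (denotation = W) in every
neighborhood model over every nonempty set of worlds. -/
def NMValid (φ : Formula) : Prop :=
  ∀ (W : Type), Nonempty W → ∀ (Sn Sc : Set W → Set W) (d : ℕ → Set W),
    nden Sn Sc d φ = Set.univ

/-- Local consequence w.r.t. neighborhood models: `Γ ⊨_NM φ` iff `⊨_NM φ`, or there is
a finite nonempty subset `{γ, γ₁,…,γₙ} ⊆ Γ` with `⊨_NM (γ ∧ γ₁ ∧ … ∧ γₙ) → φ`. -/
def NMConseq (Γ : Set Formula) (φ : Formula) : Prop :=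
  NMValid φ ∨ ∃ (γ : Formula) (l : List Formula), γ ∈ Γ ∧ (∀ ψ ∈ l, ψ ∈ Γ) ∧
    NMValid (Formula.imp (Formula.conjL γ l) φ)

/-- Proposition 5.5: given a neighborhood frame `⟨W, Sn, Sc⟩`, the
operations `¬̃X = Xᶜ ∪ Sn X` and `∘̃X = (X ∩ Sn X)ᶜ ∩ Sc X` make the powerset Boolean
algebra `℘(W)` a BALFI, and the denotation function of any neighborhood model over
the frame is a valuation over this BALFI. -/
theorem frame_balfi_and_valuation (W : Type) (hW : Nonempty W)
    (Sn Sc : Set W → Set W) :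
    IsBALFI (fun X : Set W => Xᶜ ∪ Sn X) (fun X : Set W => (X ∩ Sn X)ᶜ ∩ Sc X) ∧
    ∀ (d : ℕ → Set W) (φ : Formula),
      nden Sn Sc d φ =
        eval (fun X : Set W => Xᶜ ∪ Sn X) (fun X : Set W => (X ∩ Sn X)ᶜ ∩ Sc X) d φ := by
  constructor
  · constructor
    · intro a; ext x; simp [Set.mem_union]; tauto
    · intro a; ext x; simp [Set.mem_inter_iff]; tauto
  · intro d φ
    induction φ with
    | var n => rfl
    | and a b iha ihb => simp [nden, eval, iha, ihb]
    | or a b iha ihb => simp [nden, eval, iha, ihb]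
    | imp a b iha ihb => simp [nden, eval, iha, ihb]
    | neg a iha => simp [nden, eval, iha]
    | circ a iha =>
        simp only [nden, eval, iha]
        congr 1
        ext x; simp; tauto

end LFI
end

section
/- Soundness of RmbC with respect to neighborhood models: for every set of formulas Γ ∪ {φ} over Σ, if Γ ⊢_RmbC φ then Γ ⊨_NM φ. -/
namespace LFI

open Formula

lemma iff_eq {W : Type} {Sn Sc : Set W → Set W} {d : ℕ → Set W} {a b : Formula}
    (h : nden Sn Sc d (iffF a b) = Set.univ) :
    nden Sn Sc d a = nden Sn Sc d b := by
  ext x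
  have := Set.eq_univ_iff_forall.mp h x
  simp [iffF, nden] at this
  tauto

lemma valid_of_prf (φ : Formula) (h : Prf ∅ φ) : NMValid φ := by
  induction h with
  | ext hm => exact absurd hm (Set.notMem_empty _)
  | mp _ _ ih1 ih2 =>
    intro W hW Sn Sc d
    have h1 := ih1 W hW Sn Sc d
    have h2 := ih2 W hW Sn Sc d
    ext x
    have e1 := Set.eq_univ_iff_forall.mp h1 x
    have e2 := Set.eq_univ_iff_forall.mp h2 x
    simp [nden] at e1 ⊢
    try tauto
  | rneg _ ih =>
    intro W hW Sn Sc d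
    have heq := iff_eq (ih W hW Sn Sc d)
    ext x
    simp [iffF, nden, heq]
    try tauto
  | rcirc _ ih =>
    intro W hW Sn Sc d
    have heq := iff_eq (ih W hW Sn Sc d)
    ext x
    simp [iffF, nden, heq]
    try tauto
  | _ =>
    intro W hW Sn Sc d
    ext x
    simp [nden]
    try tauto

/-- Corollary 5.6, Soundness of RmbC w.r.t. neighborhood models:
if `Γ ⊢_RmbC φ` then `Γ ⊨_NM φ`. -/
theorem rmbc_nbhd_soundness (Γ : Set Formula) (φ : Formula)
    (h : Deriv ∅ Γ φ) : NMConseq Γ φ := by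
  rcases h with h | ⟨γ, l, hγ, hl, hp⟩
  · exact Or.inl (valid_of_prf _ h)
  · exact Or.inr ⟨γ, l, hγ, hl, valid_of_prf _ hp⟩

end LFI
end

section
/- Completeness of RmbC with respect to neighborhood models: for every set of formulas Γ ∪ {φ} over Σ, if Γ ⊨_NM φ then Γ ⊢_RmbC φ. -/
/-!
Canonical model. Its worlds are the sets of formulas that are maximal among those not
deriving some fixed formula (Lindenbaum, via Zorn); such a set is deductively closed, prime,
contains `¬α` whenever it misses `α`, and by (bc1) never contains `∘α`, `α` and `¬α` together.
The neighborhood functions are read off the syntax: `S¬ X` collects the worlds containing `¬β`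
for some `β` whose truth set is `X`, and likewise for `S∘`. Formulas with the same truth set are
provably equivalent, so by (R¬) and (R∘) the choice of `β` does not matter, and the denotation
of every formula is its truth set. A formula valid in this model therefore lies in every world,
hence is a theorem.
-/

namespace LFI

open Formula

variable {Ax : Set Formula}

namespace Prf

theorem imp_self (a : Formula) : Prf Ax (imp a a) :=
  .mp (.mp (.ax2 a (imp a a) a) (.ax1 a (imp a a))) (.ax1 a a)

theorem iffF_intro {a b : Formula} (h₁ : Prf Ax (imp a b)) (h₂ : Prf Ax (imp b a)) :
    Prf Ax (iffF a b) :=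
  .mp (.mp (.ax3 _ _) h₁) h₂

theorem iffF_mp {a b : Formula} (h : Prf Ax (iffF a b)) : Prf Ax (imp a b) :=
  .mp (.ax4 _ _) h

end Prf

/-- The replacement rules act on theorems only, never on hypotheses: this is what makes the
deduction theorem hold. -/
inductive DedFrom (Ax Γ : Set Formula) : Formula → Prop
  | prf {φ : Formula} : Prf Ax φ → DedFrom Ax Γ φ
  | hyp {φ : Formula} : φ ∈ Γ → DedFrom Ax Γ φ
  | mp {a b : Formula} : DedFrom Ax Γ (imp a b) → DedFrom Ax Γ a → DedFrom Ax Γ b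

namespace DedFrom

variable {Γ Δ : Set Formula} {φ : Formula}

theorem mono (hΓΔ : Γ ⊆ Δ) (h : DedFrom Ax Γ φ) : DedFrom Ax Δ φ := by
  induction h with
  | prf h => exact .prf h
  | hyp hφ => exact .hyp (hΓΔ hφ)
  | mp _ _ ihab iha => exact .mp ihab iha

theorem imp_intro {a : Formula} (h : DedFrom Ax (insert a Γ) φ) : DedFrom Ax Γ (imp a φ) := by
  induction h with
  | prf h => exact .mp (.prf (.ax1 _ a)) (.prf h)
  | hyp hφ =>
    rcases hφ with rfl | hφ
    · exact .prf (Prf.imp_self _)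
    · exact .mp (.prf (.ax1 _ a)) (.hyp hφ)
  | mp _ _ ihbc ihb => exact .mp (.mp (.prf (.ax2 _ _ _)) ihbc) ihb

theorem prf_of_empty (h : DedFrom Ax ∅ φ) : Prf Ax φ := by
  induction h with
  | prf h => exact h
  | hyp hφ => exact absurd hφ (Set.notMem_empty _)
  | mp _ _ ihab iha => exact ihab.mp iha

theorem exists_mem_of_sUnion {c : Set (Set Formula)} (hc : DirectedOn (· ⊆ ·) c)
    (hne : c.Nonempty) (h : DedFrom Ax (⋃₀ c) φ) : ∃ t ∈ c, DedFrom Ax t φ := by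
  induction h with
  | prf h => exact ⟨hne.some, hne.some_mem, .prf h⟩
  | hyp hφ =>
    obtain ⟨t, ht, hφt⟩ := Set.mem_sUnion.1 hφ
    exact ⟨t, ht, .hyp hφt⟩
  | mp _ _ ihab iha =>
    obtain ⟨t₁, ht₁, hab⟩ := ihab
    obtain ⟨t₂, ht₂, ha⟩ := iha
    obtain ⟨t, ht, ht₁t, ht₂t⟩ := hc t₁ ht₁ t₂ ht₂
    exact ⟨t, ht, .mp (hab.mono ht₁t) (ha.mono ht₂t)⟩

end DedFrom

structure SaturatedSet (Ax : Set Formula) where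
  carrier : Set Formula
  avoided : Formula
  not_dedFrom_avoided : ¬ DedFrom Ax carrier avoided
  dedFrom_avoided_insert : ∀ φ ∉ carrier, DedFrom Ax (insert φ carrier) avoided

namespace SaturatedSet

instance : Membership Formula (SaturatedSet Ax) := ⟨fun T φ => φ ∈ T.carrier⟩

variable (T : SaturatedSet Ax) {a b : Formula}

theorem mem_of_dedFrom (h : DedFrom Ax T.carrier a) : a ∈ T := by
  by_contra ha
  exact T.not_dedFrom_avoided (.mp (T.dedFrom_avoided_insert a ha).imp_intro h)

theorem mem_of_prf (h : Prf Ax a) : a ∈ T :=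
  T.mem_of_dedFrom (.prf h)

theorem mem_and : and a b ∈ T ↔ a ∈ T ∧ b ∈ T :=
  ⟨fun h => ⟨T.mem_of_dedFrom (.mp (.prf (.ax4 a b)) (.hyp h)),
      T.mem_of_dedFrom (.mp (.prf (.ax5 a b)) (.hyp h))⟩,
    fun ⟨ha, hb⟩ => T.mem_of_dedFrom (.mp (.mp (.prf (.ax3 a b)) (.hyp ha)) (.hyp hb))⟩

theorem mem_or : or a b ∈ T ↔ a ∈ T ∨ b ∈ T := by
  refine ⟨fun h => ?_, ?_⟩
  · by_contra! hab
    have ha := (T.dedFrom_avoided_insert a hab.1).imp_intro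
    have hb := (T.dedFrom_avoided_insert b hab.2).imp_intro
    exact T.not_dedFrom_avoided (.mp (.mp (.mp (.prf (.ax8 a b _)) ha) hb) (.hyp h))
  · rintro (ha | hb)
    · exact T.mem_of_dedFrom (.mp (.prf (.ax6 a b)) (.hyp ha))
    · exact T.mem_of_dedFrom (.mp (.prf (.ax7 a b)) (.hyp hb))

theorem mem_imp : imp a b ∈ T ↔ (a ∈ T → b ∈ T) := by
  refine ⟨fun h ha => T.mem_of_dedFrom (.mp (.hyp h) (.hyp ha)), fun h => ?_⟩
  by_cases ha : a ∈ T
  · exact T.mem_of_dedFrom (.mp (.prf (.ax1 b a)) (.hyp (h ha)))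
  · exact (T.mem_or.1 (T.mem_of_prf (.ax9 a b))).resolve_right ha

theorem neg_mem_of_notMem (ha : a ∉ T) : neg a ∈ T :=
  (T.mem_or.1 (T.mem_of_prf (.ax10 a))).resolve_left ha

theorem neg_notMem_of_circ_mem (hc : circ a ∈ T) (ha : a ∈ T) : neg a ∉ T := fun hn =>
  T.not_dedFrom_avoided (.mp (.mp (.mp (.prf (.bc1 a _)) (.hyp hc)) (.hyp ha)) (.hyp hn))

end SaturatedSet

theorem exists_saturatedSet {Γ : Set Formula} {α : Formula} (h : ¬ DedFrom Ax Γ α) :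
    ∃ T : SaturatedSet Ax, Γ ⊆ T.carrier ∧ α ∉ T := by
  let S : Set (Set Formula) := {Δ | Γ ⊆ Δ ∧ ¬ DedFrom Ax Δ α}
  have chain_bounded : ∀ c ⊆ S, IsChain (· ⊆ ·) c → c.Nonempty →
      ∃ ub ∈ S, ∀ Δ ∈ c, Δ ⊆ ub := by
    intro c hcS hc hne
    refine ⟨⋃₀ c, ⟨?_, fun hd => ?_⟩, fun Δ => Set.subset_sUnion_of_mem⟩
    · exact (hcS hne.some_mem).1.trans (Set.subset_sUnion_of_mem hne.some_mem)
    · obtain ⟨Δ, hΔ, hdΔ⟩ := hd.exists_mem_of_sUnion hc.directedOn hne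
      exact (hcS hΔ).2 hdΔ
  obtain ⟨Δ, hΓΔ, ⟨-, hΔα⟩, hmax⟩ := zorn_subset_nonempty S chain_bounded Γ ⟨subset_rfl, h⟩
  refine ⟨⟨Δ, α, hΔα, fun φ hφ => ?_⟩, hΓΔ, fun hα => hΔα (.hyp hα)⟩
  by_contra hφα
  exact hφ (hmax ⟨hΓΔ.trans (Set.subset_insert _ _), hφα⟩ (Set.subset_insert _ _)
    (Set.mem_insert _ _))

variable (Ax) in
def truthSet (a : Formula) : Set (SaturatedSet Ax) := {T | a ∈ T}

@[simp]
theorem mem_truthSet {T : SaturatedSet Ax} {a : Formula} : T ∈ truthSet Ax a ↔ a ∈ T :=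
  Iff.rfl

theorem prf_imp_of_truthSet_subset {a b : Formula} (h : truthSet Ax a ⊆ truthSet Ax b) :
    Prf Ax (imp a b) := by
  by_contra hab
  have hd : ¬ DedFrom Ax (insert a ∅) b := fun hd => hab hd.imp_intro.prf_of_empty
  obtain ⟨T, haT, hbT⟩ := exists_saturatedSet hd
  exact hbT (h (haT (Set.mem_insert a ∅)))

theorem prf_iffF_of_truthSet_eq {a b : Formula} (h : truthSet Ax a = truthSet Ax b) :
    Prf Ax (iffF a b) :=
  .iffF_intro (prf_imp_of_truthSet_subset h.le) (prf_imp_of_truthSet_subset h.ge)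

def canonicalNbhd (c : Formula → Formula) (X : Set (SaturatedSet Ax)) :
    Set (SaturatedSet Ax) :=
  {T | ∃ b, truthSet Ax b = X ∧ c b ∈ T}

theorem mem_canonicalNbhd_truthSet {c : Formula → Formula}
    (hc : ∀ {a b}, Prf Ax (iffF a b) → Prf Ax (iffF (c a) (c b)))
    {T : SaturatedSet Ax} {a : Formula} :
    T ∈ canonicalNbhd c (truthSet Ax a) ↔ c a ∈ T := by
  refine ⟨fun ⟨b, hba, hb⟩ => ?_, fun ha => ⟨a, rfl, ha⟩⟩
  exact T.mem_of_dedFrom (.mp (.prf (hc (prf_iffF_of_truthSet_eq hba)).iffF_mp) (.hyp hb))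

theorem nden_canonical (a : Formula) :
    nden (canonicalNbhd neg) (canonicalNbhd circ) (fun n => truthSet Ax (var n)) a =
      truthSet Ax a := by
  induction a with
  | var n => rfl
  | and a b iha ihb => ext T; simp [nden, iha, ihb, T.mem_and]
  | or a b iha ihb => ext T; simp [nden, iha, ihb, T.mem_or]
  | imp a b iha ihb => ext T; simp [nden, iha, ihb, T.mem_imp, imp_iff_not_or]
  | neg a iha =>
    ext T
    simp only [nden, iha, Set.mem_union, Set.mem_compl_iff, mem_truthSet,
      mem_canonicalNbhd_truthSet Prf.rneg]
    exact ⟨fun h => h.elim T.neg_mem_of_notMem id, Or.inr⟩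
  | circ a iha =>
    ext T
    simp only [nden, iha, Set.mem_inter_iff, Set.mem_union, Set.mem_compl_iff, mem_truthSet,
      mem_canonicalNbhd_truthSet Prf.rneg, mem_canonicalNbhd_truthSet Prf.rcirc]
    refine ⟨And.right, fun hc => ⟨?_, hc⟩⟩
    rintro ⟨ha, hn⟩
    exact hn.elim (· ha) (T.neg_notMem_of_circ_mem hc ha)

theorem prf_of_nmValid {φ : Formula} (h : NMValid φ) : Prf Ax φ := by
  by_contra hφ
  obtain ⟨T, -, hφT⟩ := exists_saturatedSet (Γ := ∅) fun hd => hφ hd.prf_of_empty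
  have hval := h _ ⟨T⟩ (canonicalNbhd neg) (canonicalNbhd circ) (fun n => truthSet Ax (var n))
  rw [nden_canonical] at hval
  exact hφT (hval.ge (Set.mem_univ T))

/-- Theorem 5.8, Completeness of RmbC w.r.t. neighborhood models:
if `Γ ⊨_NM φ` then `Γ ⊢_RmbC φ`. -/
theorem rmbc_nbhd_completeness (Γ : Set Formula) (φ : Formula)
    (h : NMConseq Γ φ) : Deriv ∅ Γ φ :=
  h.imp prf_of_nmValid fun ⟨γ, l, hγ, hl, hv⟩ => ⟨γ, l, hγ, hl, prf_of_nmValid hv⟩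

end LFI
end
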